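/- Propositional form of Lemma 'advanced miniscoping': let I be a finite nonempty index set, K_i finite nonempty pairwise disjoint sets, α a nonempty type, χ : I → Prop, and η : (⋃K_i) → α → Prop. Then (∃ y : α, ∀ i ∈ I, χ i ∨ ∃ k ∈ K_i, η k y) ↔ ∀ S ⊆ I, S ≠ ∅ → ((∃ i ∈ S, χ i) ∨ ∃ f : Π_{i∈I} K_i, ∃ y : α, ∀ i ∈ S, η (f i) y). -/
import Mathlib


theorem advanced_miniscoping {I : Type*} [Fintype I] [Nonempty I] [DecidableEq I]
    (K : I → Type*) [∀ i, Fintype (K i)] [∀ i, Nonempty (K i)]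
    {α : Type*} [Nonempty α]
    (χ : I → Prop) (η : ∀ i, K i → α → Prop) :
    (∃ y : α, ∀ i : I, χ i ∨ ∃ k : K i, η i k y) ↔
      ∀ S : Finset I, S.Nonempty →
        ((∃ i ∈ S, χ i) ∨ ∃ f : ∀ i : I, K i, ∃ y : α, ∀ i ∈ S, η i (f i) y) := by
  classical
  constructor
  · rintro ⟨y, hy⟩ S _
    by_cases hχ : ∃ i ∈ S, χ i
    · exact Or.inl hχ
    · right
      push_neg at hχ
      refine ⟨fun i => if h : i ∈ S then
          ((hy i).resolve_left (hχ i h)).choose else Classical.arbitrary _, y, ?_⟩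
      intro i hi
      simp only [dif_pos hi]
      exact ((hy i).resolve_left (hχ i hi)).choose_spec
  · intro h
    set T : Finset I := Finset.univ.filter (fun i => ¬ χ i) with hT
    by_cases hTne : T.Nonempty
    · rcases h T hTne with ⟨i, hi, hχi⟩ | ⟨f, y, hy⟩
      · simp [hT] at hi; exact absurd hχi hi
      · refine ⟨y, fun i => ?_⟩
        by_cases hχi : χ i
        · exact Or.inl hχi
        · exact Or.inr ⟨f i, hy i (by simp [hT, hχi])⟩
    · refine ⟨Classical.arbitrary _, fun i => Or.inl ?_⟩
      by_contra hc
      exact hTne ⟨i, by simp [hT, hc]⟩
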